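/- arXiv:1103.0430 — 2 statements merged into one kernel-verified Lean document; each statement's English description precedes it below -/
import Mathlib

section
/- Let n ≥ 2 and 1 ≤ k ≤ n−1 be integers, let γ_1, …, γ_k ∈ ℝ, and let φ : ℝⁿ → ℝ be given by φ(x) = Σ_{j=0}^{n} c_j E_j(x) with real coefficients c_j such that c_j ≠ 0 for at least one j ≥ k+1 (i.e., φ has degree at least k+1). Consider φ as a function on the real variety V = {x ∈ ℝⁿ : E_1(x) = γ_1, E_2(x) = γ_2, …, E_k(x) = γ_k}. Then every local extremum a = (a_1, …, a_n) of φ on V has at most k distinct components, i.e., the cardinality of the set {a_1, …, a_n} is at most k. -/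
/-- The `j`-th elementary symmetric polynomial of `x : Fin n → ℝ`
(`E 0 = 1`, `E j = 0` for `j > n`). -/
noncomputable def esymm (n j : ℕ) (x : Fin n → ℝ) : ℝ :=
  ∑ t ∈ Finset.powersetCard j (Finset.univ : Finset (Fin n)), ∏ i ∈ t, x i

/-!
Write `P_x = ∏ᵢ (X + xᵢ)`; its coefficient of `X ^ (n - j)` is `E_j(x)`, so `φ(x)` is a fixed
linear functional `L` of `P_x` and `V` prescribes the `k` coefficients of `P_x` just below the
leading one. Suppose the extremum `a` takes `m > k` distinct values, let `Q = ∏ (X + v)` over these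
values and `R = P_a / Q`. For `deg e < m` and small `t`, the polynomial `Q + t e` still has `m`
distinct real roots close to those of `Q` (intermediate value theorem), so moving one coordinate
per value realises `P_a + t e R`. If `deg e < m - k` the moved point stays on `V` and `φ` changes
by `t L(e R)`, so `L(X ^ i R) = 0` for `i < m - k`. When `m = n`, `R = 1` and this forces `c_j = 0`
for all `j > k`. When `m < n`, the move with `e = 1` leaves `φ` unchanged, so it produces a nearby
extremum on `V`; since `Q + t` equals `t ≠ 0` at every root of `Q`, the moved values avoid the old
ones, so it has more distinct values. This cannot be repeated forever.
-/

open Polynomial Finset Filter Topology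

section LocalExtr

variable {α : Type*} [TopologicalSpace α] {f : α → ℝ} {s : Set α} {a : α}

theorem IsLocalExtrOn.eventually_isLocalExtrOn_of_eq (hf : IsLocalExtrOn f s a) :
    ∀ᶠ b in 𝓝 a, f b = f a → IsLocalExtrOn f s b := by
  rcases hf with hf | hf
  · filter_upwards [(eventually_nhdsWithin_iff.1 hf).eventually_nhds] with b hb hfb
    exact Or.inl (eventually_nhdsWithin_iff.2 (hb.mono fun y hy hys => hfb ▸ hy hys))
  · filter_upwards [(eventually_nhdsWithin_iff.1 hf).eventually_nhds] with b hb hfb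
    exact Or.inr (eventually_nhdsWithin_iff.2 (hb.mono fun y hy hys => hfb ▸ hy hys))

theorem IsLocalExtrOn.eq_zero_of_eventually_exists (hf : IsLocalExtrOn f s a) {D : ℝ}
    (h : ∀ U ∈ 𝓝 a, ∀ᶠ t in 𝓝 (0 : ℝ), ∃ y ∈ U, y ∈ s ∧ f y = f a + t * D) : D = 0 := by
  have hline : IsLocalExtr (fun t : ℝ => f a + t * D) 0 := by
    rcases hf with hf | hf
    · refine Or.inl ((h _ (eventually_nhdsWithin_iff.1 hf)).mono ?_)
      rintro t ⟨y, hyU, hys, hy⟩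
      simpa [← hy] using hyU hys
    · refine Or.inr ((h _ (eventually_nhdsWithin_iff.1 hf)).mono ?_)
      rintro t ⟨y, hyU, hys, hy⟩
      simpa [← hy] using hyU hys
  simpa using hline.hasDerivAt_eq_zero (((hasDerivAt_id 0).mul_const D).const_add (f a))

end LocalExtr

theorem exists_mem_Ioo_eq_zero_of_mul_neg {f : ℝ → ℝ} {a b : ℝ} (hab : a ≤ b)
    (hf : ContinuousOn f (Set.Icc a b)) (h : f a * f b < 0) : ∃ ζ ∈ Set.Ioo a b, f ζ = 0 := by
  rcases lt_or_gt_of_ne (left_ne_zero_of_mul h.ne) with ha | ha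
  · exact intermediate_value_Ioo hab hf ⟨ha, pos_of_mul_neg_right h ha.le⟩
  · exact intermediate_value_Ioo' hab hf ⟨neg_of_mul_neg_right h ha.le, ha⟩

section RootPerturbation

variable {ι : Type*}

theorem eventually_two_mul_lt_abs_sub (S : Finset ι) (y : ι → ℝ) :
    ∀ᶠ δ in 𝓝 (0 : ℝ), ∀ i ∈ S, ∀ j ∈ S, y i ≠ y j → 2 * δ < |y i - y j| := by
  refine (eventually_all_finset S).2 fun i _ => (eventually_all_finset S).2 fun j _ => ?_
  by_cases hij : y i = y j
  · exact Eventually.of_forall fun _ h => absurd hij h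
  · have hpos : (2 : ℝ) * 0 < |y i - y j| := by simpa [sub_eq_zero] using hij
    exact ((continuous_const.mul continuous_id).continuousAt.eventually_lt continuousAt_const
      hpos).mono fun _ h _ => h

theorem eval_prod_X_add_C_mul_neg {S : Finset ι} {y : ι → ℝ} {i : ι} (hi : i ∈ S) {δ : ℝ}
    (hδ : 0 < δ) (hgap : ∀ j ∈ S, j ≠ i → δ < |y j - y i|) :
    eval (-y i - δ) (∏ j ∈ S, (X + C (y j))) * eval (-y i + δ) (∏ j ∈ S, (X + C (y j))) < 0 := by
  classical
  simp only [eval_prod, eval_add, eval_X, eval_C, ← prod_mul_distrib]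
  rw [← mul_prod_erase S _ hi]
  refine mul_neg_of_neg_of_pos (by nlinarith) (prod_pos fun j hj => ?_)
  have hδj : δ ^ 2 < (y j - y i) ^ 2 :=
    sq_lt_sq.2 (by rw [abs_of_pos hδ]; exact hgap j (mem_of_mem_erase hj) (ne_of_mem_erase hj))
  nlinarith

theorem natDegree_prod_X_add_C (S : Finset ι) (y : ι → ℝ) :
    (∏ i ∈ S, (X + C (y i))).natDegree = #S := by
  simp [natDegree_prod_of_monic _ _ fun i _ => monic_X_add_C (y i)]

theorem eq_prod_X_add_C_of_monic {S : Finset ι} {z : ι → ℝ} (hz : Set.InjOn z S) {q : ℝ[X]}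
    (hq : q.Monic) (hdeg : q.natDegree = #S) (hroot : ∀ i ∈ S, q.eval (-z i) = 0) :
    q = ∏ i ∈ S, (X + C (z i)) := by
  have hprod : (∏ i ∈ S, (X + C (z i))).Monic := monic_prod_of_monic _ _ fun i _ => monic_X_add_C _
  refine eq_of_degree_sub_lt_of_eval_finset_eq (S.image fun i => -z i) ?_ ?_
  · rw [card_image_of_injOn fun a ha b hb h => hz ha hb (neg_injective h), ← hdeg,
      ← degree_eq_natDegree hq.ne_zero]
    refine degree_sub_lt_left ?_ hq.ne_zero (by rw [hq.leadingCoeff, hprod.leadingCoeff])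
    rw [degree_eq_natDegree hq.ne_zero, degree_eq_natDegree hprod.ne_zero, hdeg,
      natDegree_prod_X_add_C]
  · simp only [Finset.mem_image, forall_exists_index, and_imp, forall_apply_eq_imp_iff₂]
    intro i hi
    rw [hroot i hi, eval_prod, prod_eq_zero hi (by simp)]

theorem eventually_exists_prod_X_add_C_eq_add [Fintype ι] (S : Finset ι) {y : ι → ℝ}
    (hy : Set.InjOn y S) {e : ℝ[X]} (he : e.natDegree < #S) {U : Set (ι → ℝ)} (hU : U ∈ 𝓝 y) :
    ∀ᶠ t in 𝓝 (0 : ℝ), ∃ y' ∈ U, (∀ i ∉ S, y' i = y i) ∧ Set.InjOn y' S ∧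
      ∏ i ∈ S, (X + C (y' i)) = ∏ i ∈ S, (X + C (y i)) + t • e := by
  classical
  obtain ⟨ε, hε, hball⟩ := Metric.mem_nhds_iff.1 hU
  obtain ⟨δ, ⟨hδε, hgap⟩, hδ : 0 < δ⟩ :=
    (((eventually_lt_nhds hε).and (eventually_two_mul_lt_abs_sub S y)).filter_mono
      nhdsWithin_le_nhds |>.and (self_mem_nhdsWithin (s := Set.Ioi 0))).exists
  replace hgap : ∀ i ∈ S, ∀ j ∈ S, i ≠ j → 2 * δ < |y i - y j| :=
    fun i hi j hj hij => hgap i hi j hj (hy.ne hi hj hij)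
  set p := ∏ i ∈ S, (X + C (y i))
  have hp : p.Monic := monic_prod_of_monic _ _ fun i _ => monic_X_add_C _
  have hpdeg : p.natDegree = #S := natDegree_prod_X_add_C S y
  have hsign : ∀ᶠ t in 𝓝 (0 : ℝ),
      ∀ i ∈ S, eval (-y i - δ) (p + t • e) * eval (-y i + δ) (p + t • e) < 0 := by
    refine (eventually_all_finset S).2 fun i hi => ContinuousAt.eventually_lt ?_
      continuousAt_const ?_
    · simp only [eval_add, eval_smul, smul_eq_mul]
      fun_prop
    · simpa using eval_prod_X_add_C_mul_neg hi hδ fun j hj hji => by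
        linarith [hgap j hj i hi hji]
  filter_upwards [hsign] with t ht
  choose! ζ hζ hζ0 using fun i hi =>
    exists_mem_Ioo_eq_zero_of_mul_neg (by linarith) (p + t • e).continuousOn (ht i hi)
  set y' := S.piecewise (fun i => -ζ i) y
  have hy'S : ∀ i ∈ S, y' i = -ζ i := fun i hi => S.piecewise_eq_of_mem _ _ hi
  have hy'off : ∀ i ∉ S, y' i = y i := fun i hi => S.piecewise_eq_of_notMem _ _ hi
  have hclose : ∀ i ∈ S, |y' i - y i| < δ := fun i hi => by
    rw [hy'S i hi, abs_lt]
    constructor <;> linarith [(hζ i hi).1, (hζ i hi).2]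
  have hinj : Set.InjOn y' S := by
    intro i hi j hj hij
    by_contra hne
    have hi' := abs_lt.1 (hclose i hi)
    have hj' := abs_lt.1 (hclose j hj)
    have : |y i - y j| < 2 * δ := abs_lt.2 ⟨by linarith, by linarith⟩
    linarith [hgap i hi j hj hne]
  have hedeg : (t • e).natDegree < p.natDegree := (natDegree_smul_le t e).trans_lt (hpdeg ▸ he)
  refine ⟨y', hball ?_, hy'off, hinj,
    (eq_prod_X_add_C_of_monic hinj (hp.add_of_left (degree_lt_degree hedeg)) ?_ ?_).symm⟩
  · rw [Metric.mem_ball, dist_pi_lt_iff hε]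
    intro i
    by_cases hi : i ∈ S
    · exact (Real.dist_eq _ _ ▸ hclose i hi).trans hδε
    · simpa [hy'off i hi] using hε
  · rw [natDegree_add_eq_left_of_natDegree_lt hedeg, hpdeg]
  · intro i hi
    rw [hy'S i hi, neg_neg]
    exact hζ0 i hi

end RootPerturbation

theorem card_image_lt_of_prod_X_add_C_eq_add_C {ι : Type*} [Fintype ι] {x x' : ι → ℝ}
    {S : Finset ι} (hSx : S.image x = univ.image x) (hx : Set.InjOn x S) (hx' : Set.InjOn x' S)
    {j : ι} (hj : x' j = x j) {t : ℝ} (ht : t ≠ 0)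
    (hprod : ∏ i ∈ S, (X + C (x' i)) = ∏ i ∈ S, (X + C (x i)) + C t) :
    #(univ.image x) < #(univ.image x') := by
  have hnew : ∀ i ∈ S, x' i ≠ x' j := by
    intro i hi hij
    obtain ⟨l, hl, hlj⟩ := Finset.mem_image.1 (hSx ▸ mem_image_of_mem x (mem_univ j))
    have h := congrArg (eval (-x j)) hprod
    simp only [eval_add, eval_prod, eval_X, eval_C] at h
    rw [prod_eq_zero hi (by rw [hij, hj, neg_add_cancel]),
      prod_eq_zero hl (by rw [hlj, neg_add_cancel]), zero_add] at h
    exact ht h.symm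
  calc #(univ.image x) = #S := by rw [← hSx, card_image_of_injOn hx]
    _ = #(S.image x') := (card_image_of_injOn hx').symm
    _ < #(insert (x' j) (S.image x')) := card_lt_card (ssubset_insert (by simpa using hnew))
    _ ≤ #(univ.image x') := card_le_card (insert_subset (mem_image_of_mem _ (mem_univ j))
        (image_subset_image (subset_univ S)))

noncomputable def esymmPoly {ι : Type*} [Fintype ι] (x : ι → ℝ) : ℝ[X] := ∏ i, (X + C (x i))

theorem esymmPoly_eq_add_of_prod_eq_add {ι : Type*} [Fintype ι] [DecidableEq ι] {x x' : ι → ℝ}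
    {S : Finset ι} (hoff : ∀ i ∉ S, x' i = x i) {t : ℝ} {e : ℝ[X]}
    (h : ∏ i ∈ S, (X + C (x' i)) = ∏ i ∈ S, (X + C (x i)) + t • e) :
    esymmPoly x' = esymmPoly x + t • (e * ∏ i ∈ Sᶜ, (X + C (x i))) := by
  have hcompl : ∏ i ∈ Sᶜ, (X + C (x' i)) = ∏ i ∈ Sᶜ, (X + C (x i)) :=
    prod_congr rfl fun i hi => by rw [hoff i (mem_compl.1 hi)]
  rw [esymmPoly, esymmPoly, ← prod_mul_prod_compl S, ← prod_mul_prod_compl S (fun i => X + C (x i)),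
    h, hcompl, add_mul, smul_mul_assoc]

section EsymmCombination

variable {n : ℕ}

theorem esymm_eq_coeff_esymmPoly {j : ℕ} (hj : j ≤ n) (x : Fin n → ℝ) :
    esymm n j x = (esymmPoly x).coeff (n - j) := by
  rw [esymmPoly, Finset.prod_X_add_C_coeff univ x (by simp), card_univ, Fintype.card_fin,
    Nat.sub_sub_self hj]
  rfl

noncomputable def weightedCoeff (n : ℕ) (c : ℕ → ℝ) : ℝ[X] →ₗ[ℝ] ℝ :=
  ∑ j ∈ range (n + 1), c j • lcoeff ℝ (n - j)

theorem weightedCoeff_apply (c : ℕ → ℝ) (p : ℝ[X]) :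
    weightedCoeff n c p = ∑ j ∈ range (n + 1), c j * p.coeff (n - j) := by
  simp [weightedCoeff]

theorem weightedCoeff_X_pow (c : ℕ → ℝ) {i : ℕ} (hi : i ≤ n) :
    weightedCoeff n c (X ^ i) = c (n - i) := by
  rw [weightedCoeff_apply, sum_eq_single (n - i)]
  · simp [coeff_X_pow, Nat.sub_sub_self hi]
  · intro j hj hji
    rw [coeff_X_pow, if_neg (by have := mem_range.1 hj; omega), mul_zero]
  · intro h
    exact absurd (mem_range.2 (by omega)) h

noncomputable def esymmComb (n : ℕ) (c : ℕ → ℝ) (x : Fin n → ℝ) : ℝ :=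
  ∑ j ∈ range (n + 1), c j * esymm n j x

theorem esymmComb_eq_weightedCoeff (c : ℕ → ℝ) (x : Fin n → ℝ) :
    esymmComb n c x = weightedCoeff n c (esymmPoly x) := by
  rw [esymmComb, weightedCoeff_apply]
  exact sum_congr rfl fun j hj => by
    rw [esymm_eq_coeff_esymmPoly (Nat.lt_succ_iff.1 (mem_range.1 hj))]

theorem esymmComb_eq_add {c : ℕ → ℝ} {x x' : Fin n → ℝ} {t : ℝ} {B : ℝ[X]}
    (h : esymmPoly x' = esymmPoly x + t • B) :
    esymmComb n c x' = esymmComb n c x + t * weightedCoeff n c B := by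
  rw [esymmComb_eq_weightedCoeff, esymmComb_eq_weightedCoeff, h, map_add, map_smul, smul_eq_mul]

def esymmLevelSet (n k : ℕ) (γ : ℕ → ℝ) : Set (Fin n → ℝ) :=
  {x | ∀ j, 1 ≤ j → j ≤ k → esymm n j x = γ j}

variable {k : ℕ} {γ c : ℕ → ℝ} {x : Fin n → ℝ}

theorem mem_esymmLevelSet_of_esymmPoly_eq_add (hx : x ∈ esymmLevelSet n k γ) {x' : Fin n → ℝ}
    {t : ℝ} {B : ℝ[X]} (hB : B.natDegree + k < n) (h : esymmPoly x' = esymmPoly x + t • B) :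
    x' ∈ esymmLevelSet n k γ := by
  intro j hj1 hjk
  rw [esymm_eq_coeff_esymmPoly (by omega), h, coeff_add, coeff_smul,
    coeff_eq_zero_of_natDegree_lt (p := B) (n := n - j) (by omega), smul_zero, add_zero,
    ← esymm_eq_coeff_esymmPoly (by omega)]
  exact hx j hj1 hjk

theorem natDegree_mul_prod_compl_add_lt {S : Finset (Fin n)} {e : ℝ[X]} (he : e.natDegree + k < #S)
    (x : Fin n → ℝ) : (e * ∏ i ∈ Sᶜ, (X + C (x i))).natDegree + k < n := by
  have hdeg := natDegree_mul_le (p := e) (q := ∏ i ∈ Sᶜ, (X + C (x i)))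
  rw [natDegree_prod_X_add_C, card_compl, Fintype.card_fin] at hdeg
  have hS := S.card_le_univ
  rw [Fintype.card_fin] at hS
  omega

theorem weightedCoeff_mul_prod_compl_eq_zero
    (hx : IsLocalExtrOn (esymmComb n c) (esymmLevelSet n k γ) x) (hxV : x ∈ esymmLevelSet n k γ)
    {S : Finset (Fin n)} (hS : Set.InjOn x S) {e : ℝ[X]} (he : e.natDegree + k < #S) :
    weightedCoeff n c (e * ∏ i ∈ Sᶜ, (X + C (x i))) = 0 := by
  refine hx.eq_zero_of_eventually_exists fun U hU => ?_
  filter_upwards [eventually_exists_prod_X_add_C_eq_add S hS (e := e) (by omega) hU] with t ht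
  obtain ⟨x', hx'U, hoff, -, hprod⟩ := ht
  have hP := esymmPoly_eq_add_of_prod_eq_add hoff hprod
  exact ⟨x', hx'U,
    mem_esymmLevelSet_of_esymmPoly_eq_add hxV (natDegree_mul_prod_compl_add_lt he x) hP,
    esymmComb_eq_add hP⟩

theorem card_image_lt_of_isLocalExtrOn (hdeg : ∃ j, k + 1 ≤ j ∧ j ≤ n ∧ c j ≠ 0)
    (hx : IsLocalExtrOn (esymmComb n c) (esymmLevelSet n k γ) x) (hxV : x ∈ esymmLevelSet n k γ) :
    #(univ.image x) < n := by
  refine (card_image_le.trans_eq (card_fin n)).lt_of_ne fun hcard => ?_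
  obtain ⟨j, hkj, hjn, hcj⟩ := hdeg
  have hinj : Set.InjOn x (univ : Finset (Fin n)) :=
    card_image_iff.1 (hcard.trans (card_fin n).symm)
  have h := weightedCoeff_mul_prod_compl_eq_zero hx hxV hinj (e := X ^ (n - j)) (by simp; omega)
  rw [compl_univ, prod_empty, mul_one, weightedCoeff_X_pow c (Nat.sub_le n j),
    Nat.sub_sub_self hjn] at h
  exact hcj h

theorem exists_isLocalExtrOn_card_image_lt
    (hx : IsLocalExtrOn (esymmComb n c) (esymmLevelSet n k γ) x) (hxV : x ∈ esymmLevelSet n k γ)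
    {S : Finset (Fin n)} (hS : Set.InjOn x S) (hSx : S.image x = univ.image x) (hkS : k < #S)
    {j : Fin n} (hj : j ∉ S) :
    ∃ x' ∈ esymmLevelSet n k γ, IsLocalExtrOn (esymmComb n c) (esymmLevelSet n k γ) x' ∧
      #(univ.image x) < #(univ.image x') := by
  have he : (1 : ℝ[X]).natDegree + k < #S := by simpa using hkS
  have hR := weightedCoeff_mul_prod_compl_eq_zero hx hxV hS he
  have hpert := eventually_exists_prod_X_add_C_eq_add S hS (e := 1) (by omega)
    hx.eventually_isLocalExtrOn_of_eq
  obtain ⟨t, ⟨x', hx'U, hoff, hinj', hprod⟩, ht : t ≠ 0⟩ :=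
    ((hpert.filter_mono nhdsWithin_le_nhds).and (self_mem_nhdsWithin (s := {0}ᶜ))).exists
  have hP := esymmPoly_eq_add_of_prod_eq_add hoff hprod
  refine ⟨x', mem_esymmLevelSet_of_esymmPoly_eq_add hxV (natDegree_mul_prod_compl_add_lt he x) hP,
    hx'U (by rw [esymmComb_eq_add hP, hR, mul_zero, add_zero]),
    card_image_lt_of_prod_X_add_C_eq_add_C hSx hS hinj' (hoff j hj) ht ?_⟩
  rwa [smul_eq_C_mul, mul_one] at hprod

end EsymmCombination

theorem false_of_forall_exists_lt {α : Type*} {P : α → Prop} {f : α → ℕ} {N : ℕ}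
    (hf : ∀ x, f x ≤ N) (h : ∀ x, P x → ∃ y, P y ∧ f x < f y) {a : α} (ha : P a) : False := by
  obtain ⟨x, hx, hmin⟩ := (measure fun x => N - f x).wf.has_min {x | P x} ⟨a, ha⟩
  obtain ⟨y, hy, hxy⟩ := h x hx
  exact hmin y hy (show N - f y < N - f x by have := hf y; omega)

theorem extrema_on_variety_general (n k : ℕ)
    (γ : ℕ → ℝ) (c : ℕ → ℝ)
    (hdeg : ∃ j, k + 1 ≤ j ∧ j ≤ n ∧ c j ≠ 0)
    (φ : (Fin n → ℝ) → ℝ)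
    (hφ : ∀ x, φ x = ∑ j ∈ Finset.range (n + 1), c j * esymm n j x)
    (V : Set (Fin n → ℝ))
    (hV : V = {x | ∀ j, 1 ≤ j → j ≤ k → esymm n j x = γ j})
    (a : Fin n → ℝ) (ha : a ∈ V)
    (hext : IsLocalMinOn φ V a ∨ IsLocalMaxOn φ V a) :
    (Finset.image a Finset.univ).card ≤ k := by
  obtain rfl : φ = esymmComb n c := funext hφ
  obtain rfl : V = esymmLevelSet n k γ := hV
  by_contra! hk
  refine false_of_forall_exists_lt (P := fun x => x ∈ esymmLevelSet n k γ ∧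
      IsLocalExtrOn (esymmComb n c) (esymmLevelSet n k γ) x ∧ k < #(univ.image x))
    (f := fun x => #(univ.image x)) (fun x => card_image_le.trans_eq (card_fin n)) ?_
    ⟨ha, hext, hk⟩
  rintro x ⟨hxV, hx, hkx⟩
  obtain ⟨S, -, hS, hSx⟩ :=
    exists_subset_injOn_image_eq_of_surjOn (f := x) Set.univ (univ.image x)
      fun v hv => by simpa using hv
  have hSn : #S < #(univ : Finset (Fin n)) := by
    rw [card_fin, ← card_image_of_injOn hS, hSx]
    exact card_image_lt_of_isLocalExtrOn hdeg hx hxV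
  obtain ⟨j, -, hj⟩ := exists_mem_notMem_of_card_lt_card hSn
  obtain ⟨x', hx'V, hx', hlt⟩ := exists_isLocalExtrOn_card_image_lt hx hxV hS hSx
    (by rwa [← card_image_of_injOn hS, hSx]) hj
  exact ⟨x', ⟨hx'V, hx', hkx.trans hlt⟩, hlt⟩

/-- Kovačec–Kuhlmann–Riener, Theorem 3: if `φ` is a real linear combination of
elementary symmetric polynomials of degree at least `k + 1`, considered on the
variety `V = {x : E₁(x) = γ₁, …, E_k(x) = γ_k}`, then every local extremum `a`
of `φ` on `V` has at most `k` distinct components. -/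
theorem extrema_on_variety (n k : ℕ) (hn : 2 ≤ n) (hk1 : 1 ≤ k) (hkn : k ≤ n - 1)
    (γ : ℕ → ℝ) (c : ℕ → ℝ)
    (hdeg : ∃ j, k + 1 ≤ j ∧ j ≤ n ∧ c j ≠ 0)
    (φ : (Fin n → ℝ) → ℝ)
    (hφ : ∀ x, φ x = ∑ j ∈ Finset.range (n + 1), c j * esymm n j x)
    (V : Set (Fin n → ℝ))
    (hV : V = {x | ∀ j, 1 ≤ j → j ≤ k → esymm n j x = γ j})
    (a : Fin n → ℝ) (ha : a ∈ V)
    (hext : IsLocalMinOn φ V a ∨ IsLocalMaxOn φ V a) :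
    (Finset.image a Finset.univ).card ≤ k :=
  extrema_on_variety_general n k γ c hdeg φ hφ V hV a ha hext
end

section
/- Let a_i < b_i (i = 1, …, n) and γ be real numbers, and let D' = {x ∈ ℝⁿ : a_i ≤ x_i ≤ b_i for all i, and x_1 + ⋯ + x_n = γ}. Let K ⊆ {1, …, n}, let u_l ∈ {a_l, b_l} for each l ∈ K^c = {1,…,n} \ K, and let F = {x ∈ ℝⁿ : x_l = u_l for all l ∈ K^c, a_k ≤ x_k ≤ b_k for all k ∈ K, Σ_{k∈K} x_k + Σ_{l∈K^c} u_l = γ} be nonempty. If moreover there exists a point x ∈ F with a_k < x_k < b_k for all k ∈ K (so that K^c is maximal in the sense that the inequality conditions can be simultaneously satisfied without equalities), then the affine dimension of F (the dimension of the affine hull of F) equals max(|K| − 1, 0). -/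
/-!
The face `F` lies in `x₀ + W`, where `x₀` is the given point and `W` is the space of vectors
vanishing off `K` whose `K`-coordinates sum to zero. Conversely, since `x₀` satisfies the box
constraints on `K` strictly, a small nonzero multiple of any `w ∈ W` can be added to `x₀` without
leaving `F`. Hence the direction of the affine hull of `F` is `W`, and `W` is the kernel of
`v ↦ (v|Kᶜ, ∑_{k ∈ K} v k)`, which is onto `ℝ^{Kᶜ} × ℝ` when `K ≠ ∅`; rank–nullity gives
`dim W = |K| - 1`.
-/

open Filter Topology

theorem direction_affineSpan_eq_of_forall_smul_vadd_mem {k V P : Type*} [Field k]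
    [AddCommGroup V] [Module k V] [AddTorsor V P] {s : Set P} {W : Submodule k V} {x : P}
    (hx : x ∈ s) (hsub : ∀ y ∈ s, y -ᵥ x ∈ W)
    (hsmul : ∀ w ∈ W, ∃ c : k, c ≠ 0 ∧ c • w +ᵥ x ∈ s) :
    (affineSpan k s).direction = W := by
  rw [direction_affineSpan, vectorSpan_eq_span_vsub_set_right k hx]
  refine le_antisymm (Submodule.span_le.2 ?_) fun w hw => ?_
  · rintro _ ⟨y, hy, rfl⟩
    exact hsub y hy
  · obtain ⟨c, hc, hcw⟩ := hsmul w hw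
    have hw_eq : w = c⁻¹ • ((c • w +ᵥ x) -ᵥ x) := by rw [vadd_vsub, inv_smul_smul₀ hc]
    rw [hw_eq]
    exact Submodule.smul_mem _ _ (Submodule.subset_span ⟨_, hcw, rfl⟩)

theorem exists_ne_zero_add_smul_mem {𝕜 E : Type*} [NontriviallyNormedField 𝕜]
    [AddCommGroup E] [Module 𝕜 E] [TopologicalSpace E] [ContinuousAdd E] [ContinuousSMul 𝕜 E]
    {U : Set E} {x : E} (hU : U ∈ 𝓝 x) (v : E) : ∃ c : 𝕜, c ≠ 0 ∧ x + c • v ∈ U := by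
  have hcont : Tendsto (fun c : 𝕜 => x + c • v) (𝓝 0) (𝓝 x) :=
    Continuous.tendsto' (by fun_prop) 0 x (by simp)
  obtain ⟨c, hcU, hc⟩ := ((hcont.eventually hU).filter_mono nhdsWithin_le_nhds).and
    (self_mem_nhdsWithin : {c : 𝕜 | c ≠ 0} ∈ 𝓝[≠] 0) |>.exists
  exact ⟨c, hc, hcU⟩

section ComplRestrictSum

variable {k ι : Type*} [Field k] [Fintype ι] [DecidableEq ι]

def complRestrictSum (K : Finset ι) : (ι → k) →ₗ[k] (↥Kᶜ → k) × k :=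
  (LinearMap.funLeft k k (Subtype.val : ↥Kᶜ → ι)).prod (∑ i ∈ K, LinearMap.proj i)

theorem mem_ker_complRestrictSum {K : Finset ι} {v : ι → k} :
    v ∈ LinearMap.ker (complRestrictSum K) ↔ (∀ i ∉ K, v i = 0) ∧ ∑ i ∈ K, v i = 0 := by
  simp [complRestrictSum, funext_iff, LinearMap.funLeft]

theorem complRestrictSum_surjective {K : Finset ι} (hK : K.Nonempty) :
    Function.Surjective (complRestrictSum (k := k) K) := by
  obtain ⟨i₀, hi₀⟩ := hK
  rintro ⟨f, c⟩
  refine ⟨fun i => if h : i ∈ K then (if i = i₀ then c else 0) else f ⟨i, Finset.mem_compl.2 h⟩,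
    ?_⟩
  ext l
  · simp [complRestrictSum, LinearMap.funLeft, Finset.mem_compl.1 l.2]
  · simp [complRestrictSum, Finset.sum_dite_of_true, hi₀,
      Finset.sum_attach K fun i => if i = i₀ then c else 0]

theorem finrank_ker_complRestrictSum (K : Finset ι) :
    Module.finrank k (LinearMap.ker (complRestrictSum (k := k) K)) = K.card - 1 := by
  rcases K.eq_empty_or_nonempty with rfl | hK
  · have hbot : LinearMap.ker (complRestrictSum (k := k) (∅ : Finset ι)) = ⊥ :=
      (Submodule.eq_bot_iff _).2 fun v hv => funext fun i =>
        (mem_ker_complRestrictSum.1 hv).1 i (Finset.notMem_empty i)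
    simp [hbot]
  · have hrank := (complRestrictSum (k := k) K).finrank_range_add_finrank_ker
    rw [LinearMap.range_eq_top.2 (complRestrictSum_surjective hK), finrank_top,
      Module.finrank_prod, Module.finrank_self, Module.finrank_fintype_fun_eq_card,
      Module.finrank_fintype_fun_eq_card, Fintype.card_coe, Finset.card_compl] at hrank
    have := K.card_le_univ
    have := hK.card_pos
    omega

end ComplRestrictSum

section BoxFace

variable {ι : Type*} [Fintype ι] [DecidableEq ι]

def boxFace (a b u : ι → ℝ) (γ : ℝ) (K : Finset ι) : Set (ι → ℝ) :=
  {x | (∀ l ∉ K, x l = u l) ∧ (∀ k ∈ K, a k ≤ x k ∧ x k ≤ b k) ∧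
    (∑ k ∈ K, x k) + (∑ l ∈ Kᶜ, u l) = γ}

variable {a b u x y v : ι → ℝ} {γ : ℝ} {K : Finset ι}

theorem sub_mem_ker_of_mem_boxFace (hx : x ∈ boxFace a b u γ K) (hy : y ∈ boxFace a b u γ K) :
    y - x ∈ LinearMap.ker (complRestrictSum K) := by
  obtain ⟨hxu, -, hxsum⟩ := hx
  obtain ⟨hyu, -, hysum⟩ := hy
  refine mem_ker_complRestrictSum.2 ⟨fun l hl => by simp [hxu l hl, hyu l hl], ?_⟩
  simp only [Pi.sub_apply, Finset.sum_sub_distrib]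
  linarith

theorem add_mem_boxFace (hx : x ∈ boxFace a b u γ K) (hv : v ∈ LinearMap.ker (complRestrictSum K))
    (hbox : ∀ k ∈ K, a k ≤ x k + v k ∧ x k + v k ≤ b k) : x + v ∈ boxFace a b u γ K := by
  obtain ⟨hxu, -, hxsum⟩ := hx
  obtain ⟨hv0, hvsum⟩ := mem_ker_complRestrictSum.1 hv
  refine ⟨fun l hl => by simp [hxu l hl, hv0 l hl], hbox, ?_⟩
  simpa only [Pi.add_apply, Finset.sum_add_distrib, hvsum, add_zero] using hxsum

end BoxFace

theorem setOf_forall_mem_Ioo_mem_nhds {ι : Type*} {a b x : ι → ℝ} {K : Finset ι}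
    (hx : ∀ k ∈ K, a k < x k ∧ x k < b k) : {y | ∀ k ∈ K, a k < y k ∧ y k < b k} ∈ 𝓝 x :=
  (eventually_all_finset K).2 fun k hk =>
    (continuous_apply k).continuousAt.eventually (Ioo_mem_nhds (hx k hk).1 (hx k hk).2)

theorem dimension_of_face_general (n : ℕ) (a b : Fin n → ℝ) (γ : ℝ)
    (K : Finset (Fin n)) (u : Fin n → ℝ)
    (F : Set (Fin n → ℝ))
    (hF : F = {x | (∀ l ∉ K, x l = u l) ∧ (∀ k ∈ K, a k ≤ x k ∧ x k ≤ b k) ∧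
      (∑ k ∈ K, x k) + (∑ l ∈ Kᶜ, u l) = γ})
    (hstrict : ∃ x ∈ F, ∀ k ∈ K, a k < x k ∧ x k < b k) :
    Module.finrank ℝ (affineSpan ℝ F).direction = K.card - 1 := by
  change F = boxFace a b u γ K at hF
  subst hF
  obtain ⟨x₀, hx₀, hx₀_strict⟩ := hstrict
  suffices hsmul : ∀ w ∈ LinearMap.ker (complRestrictSum K),
      ∃ c : ℝ, c ≠ 0 ∧ c • w +ᵥ x₀ ∈ boxFace a b u γ K by
    rw [direction_affineSpan_eq_of_forall_smul_vadd_mem hx₀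
      (fun y hy => sub_mem_ker_of_mem_boxFace hx₀ hy) hsmul, finrank_ker_complRestrictSum]
  intro w hw
  obtain ⟨c, hc, hcw⟩ :=
    exists_ne_zero_add_smul_mem (𝕜 := ℝ) (setOf_forall_mem_Ioo_mem_nhds hx₀_strict) w
  refine ⟨c, hc, ?_⟩
  rw [vadd_eq_add, add_comm]
  exact add_mem_boxFace hx₀ (Submodule.smul_mem _ c hw) fun k hk =>
    ⟨(hcw k hk).1.le, (hcw k hk).2.le⟩

/-- Kovačec–Kuhlmann–Riener, Lemma 4 (dimension of faces): if the face
`F = {x : x_l = u_l (l ∈ Kᶜ), a_k ≤ x_k ≤ b_k (k ∈ K), Σ_{k∈K} x_k + Σ_{l∈Kᶜ} u_l = γ}`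
of the polytope `D'` is nonempty and contains a point whose `K`-coordinates
satisfy the inequalities strictly (so `Kᶜ` is maximal), then the affine
dimension of `F` (the dimension of the direction of its affine hull) is
`max(|K| − 1, 0)`, i.e. `|K| − 1` in truncated natural subtraction. -/
theorem dimension_of_face (n : ℕ) (a b : Fin n → ℝ) (hab : ∀ i, a i < b i) (γ : ℝ)
    (K : Finset (Fin n)) (u : Fin n → ℝ)
    (hu : ∀ l ∉ K, u l = a l ∨ u l = b l)
    (F : Set (Fin n → ℝ))
    (hF : F = {x | (∀ l ∉ K, x l = u l) ∧ (∀ k ∈ K, a k ≤ x k ∧ x k ≤ b k) ∧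
      (∑ k ∈ K, x k) + (∑ l ∈ Kᶜ, u l) = γ})
    (hstrict : ∃ x ∈ F, ∀ k ∈ K, a k < x k ∧ x k < b k) :
    Module.finrank ℝ (affineSpan ℝ F).direction = K.card - 1 :=
  dimension_of_face_general n a b γ K u F hF hstrict
end
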